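/- arXiv:2010.04187 — 3 statements merged into one kernel-verified Lean document; each statement's English description precedes it below -/
import Mathlib

section
/- Given a feasible solution y of a sequential relaxation of an MKP instance, define x_{ij} = (Σ over pieces of item j assigned to knapsack i of their sizes) / w_j. Then x is a feasible solution of the LP relaxation of the MKP (0 ≤ x_{ij}, Σ_i x_{ij} ≤ 1 for each j, Σ_j w_j x_{ij} ≤ c_i for each i) with the same objective value as y. -/
open Finset

-- After swapping the sums, piece `k` contributes `s k` to at most one bin `i`.
theorem sum_sum_ite_eq_some_le {ι β : Type*} [Fintype ι] [Fintype β] [DecidableEq β]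
    (a : ι → Option β) (s : ι → ℝ) (hs : ∀ k, 0 ≤ s k) :
    ∑ i, ∑ k, (if a k = some i then s k else 0) ≤ ∑ k, s k := by
  rw [sum_comm]
  gcongr with k
  cases a k with
  | none => simpa using hs k
  | some _ => simp

theorem LP_solution_from_sequential_solution_general
    (m n : ℕ) (w p : Fin n → ℝ) (c : Fin m → ℝ)
    (hw : ∀ j, 0 < w j)
    (K : Fin n → ℕ) (s : (j : Fin n) → Fin (K j) → ℝ)
    (hs : ∀ j k, 0 < s j k) (hsum : ∀ j, ∑ k, s j k = w j)
    (a : (j : Fin n) → Fin (K j) → Option (Fin m))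
    (ha : ∀ i, ∑ j, ∑ k, (if a j k = some i then s j k else 0) ≤ c i)
    (x : Fin m → Fin n → ℝ)
    (hx : ∀ i j, x i j = (∑ k, if a j k = some i then s j k else 0) / w j) :
    (∀ i j, 0 ≤ x i j) ∧
    (∀ j, ∑ i, x i j ≤ 1) ∧
    (∀ i, ∑ j, w j * x i j ≤ c i) ∧
    (∑ i, ∑ j, p j * x i j
      = ∑ i, ∑ j, ∑ k, (if a j k = some i then (p j / w j) * s j k else 0)) := by
  have hwx : ∀ i j, w j * x i j = ∑ k, if a j k = some i then s j k else 0 := fun i j => by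
    rw [hx, mul_div_cancel₀ _ (hw j).ne']
  refine ⟨fun i j => ?_, fun j => ?_, fun i => ?_, ?_⟩
  · rw [hx]
    exact div_nonneg (sum_nonneg fun k _ => ite_nonneg (hs j k).le le_rfl) (hw j).le
  · simp_rw [hx, ← sum_div]
    rw [div_le_one (hw j), ← hsum j]
    exact sum_sum_ite_eq_some_le (a j) (s j) fun k => (hs j k).le
  · simp_rw [hwx]
    exact ha i
  · refine sum_congr rfl fun i _ => sum_congr rfl fun j _ => ?_
    rw [show p j * x i j = p j / w j * (w j * x i j) by field_simp [(hw j).ne'], hwx, mul_sum]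
    simp_rw [mul_ite, mul_zero]

/-- a feasible solution of a sequential relaxation induces, via
`x i j = (total size of pieces of item j in knapsack i) / w j`, a feasible
solution of the LP relaxation of MKP with the same objective value. -/
theorem LP_solution_from_sequential_solution
    (m n : ℕ) (w p : Fin n → ℝ) (c : Fin m → ℝ)
    (hw : ∀ j, 0 < w j) (hp : ∀ j, 0 ≤ p j)
    (K : Fin n → ℕ) (s : (j : Fin n) → Fin (K j) → ℝ)
    (hs : ∀ j k, 0 < s j k) (hsum : ∀ j, ∑ k, s j k = w j)
    (a : (j : Fin n) → Fin (K j) → Option (Fin m))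
    (ha : ∀ i, ∑ j, ∑ k, (if a j k = some i then s j k else 0) ≤ c i)
    (x : Fin m → Fin n → ℝ)
    (hx : ∀ i j, x i j = (∑ k, if a j k = some i then s j k else 0) / w j) :
    (∀ i j, 0 ≤ x i j) ∧
    (∀ j, ∑ i, x i j ≤ 1) ∧
    (∀ i, ∑ j, w j * x i j ≤ c i) ∧
    (∑ i, ∑ j, p j * x i j
      = ∑ i, ∑ j, ∑ k, (if a j k = some i then (p j / w j) * s j k else 0)) :=
  LP_solution_from_sequential_solution_general m n w p c hw K s hs hsum a ha x hx
end

section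
/- The optimal value of any sequential relaxation of an MKP instance is at most the optimal value of the LP relaxation of the standard MKP formulation: z_seq ≤ z_LPMKP. -/
/-!
Cutting items into pieces only loses integrality. Given an optimal assignment of pieces, let
`x i j` be the fraction of item `j` (by size) whose pieces lie in knapsack `i`. Since the pieces of
`j` have total size `w j` and each goes to at most one knapsack, `x` is feasible for the LP
relaxation; the load of knapsack `i` is unchanged, and because profit is proportional to size, so
is the objective value.
-/

open Finset

section PieceAssignment

variable {ι μ : Type*} [DecidableEq μ] {κ : ι → Type*} [∀ j, Fintype (κ j)]
  (a : (j : ι) → κ j → Option μ) (s : (j : ι) → κ j → ℝ)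

/-- `a j k = none` leaves piece `k` of item `j` unpacked. -/
def pieceLoad (i : μ) (j : ι) : ℝ :=
  ∑ k, if a j k = some i then s j k else 0

variable {a s}

theorem pieceLoad_nonneg {j : ι} (hs : ∀ k, 0 ≤ s j k) (i : μ) : 0 ≤ pieceLoad a s i j :=
  sum_nonneg fun k _ => by split_ifs <;> simp [hs k]

theorem pieceLoad_le_sum {j : ι} (hs : ∀ k, 0 ≤ s j k) (i : μ) :
    pieceLoad a s i j ≤ ∑ k, s j k :=
  sum_le_sum fun k _ => by split_ifs <;> simp [hs k]

theorem sum_ite_eq_some_le [Fintype μ] {o : Option μ} {x : ℝ} (hx : 0 ≤ x) :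
    ∑ i, (if o = some i then x else 0) ≤ x := by
  cases o <;> simp [hx]

theorem sum_pieceLoad_le_sum [Fintype μ] {j : ι} (hs : ∀ k, 0 ≤ s j k) :
    ∑ i, pieceLoad a s i j ≤ ∑ k, s j k := by
  simp only [pieceLoad]
  rw [sum_comm]
  exact sum_le_sum fun k _ => sum_ite_eq_some_le (hs k)

theorem sum_ite_mul_eq_mul_pieceLoad (r : ℝ) (i : μ) (j : ι) :
    ∑ k, (if a j k = some i then r * s j k else 0) = r * pieceLoad a s i j := by
  simp only [pieceLoad, mul_sum, mul_ite, mul_zero]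

end PieceAssignment

theorem zseq_le_zLP_general
    (m n : ℕ) (w p : Fin n → ℝ) (c : Fin m → ℝ)
    (hw : ∀ j, 0 < w j)
    (K : Fin n → ℕ) (s : (j : Fin n) → Fin (K j) → ℝ)
    (hs : ∀ j k, 0 < s j k) (hsum : ∀ j, ∑ k, s j k = w j)
    (zseq zLP : ℝ)
    (hseq : IsGreatest {z : ℝ | ∃ a : (j : Fin n) → Fin (K j) → Option (Fin m),
        (∀ i, ∑ j, ∑ k, (if a j k = some i then s j k else 0) ≤ c i) ∧
        z = ∑ i, ∑ j, ∑ k, (if a j k = some i then (p j / w j) * s j k else 0)} zseq)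
    (hLP : IsGreatest {z : ℝ | ∃ x : Fin m → Fin n → ℝ,
        (∀ i j, 0 ≤ x i j ∧ x i j ≤ 1) ∧
        (∀ i, ∑ j, w j * x i j ≤ c i) ∧
        (∀ j, ∑ i, x i j ≤ 1) ∧
        z = ∑ i, ∑ j, p j * x i j} zLP) :
    zseq ≤ zLP := by
  obtain ⟨a, hcap, rfl⟩ := hseq.1
  have hs₀ : ∀ j k, 0 ≤ s j k := fun j k => (hs j k).le
  refine hLP.2 ⟨fun i j => pieceLoad a s i j / w j, fun i j => ⟨?_, ?_⟩, fun i => ?_, fun j => ?_, ?_⟩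
  · exact div_nonneg (pieceLoad_nonneg (hs₀ j) i) (hw j).le
  · rw [div_le_one (hw j), ← hsum j]
    exact pieceLoad_le_sum (hs₀ j) i
  · simpa only [mul_div_cancel₀ _ (hw _).ne', pieceLoad] using hcap i
  · rw [← sum_div, div_le_one (hw j), ← hsum j]
    exact sum_pieceLoad_le_sum (hs₀ j)
  · refine sum_congr rfl fun i _ => sum_congr rfl fun j _ => ?_
    rw [sum_ite_mul_eq_mul_pieceLoad (a := a) (s := s)]
    ring

/-- the optimal value of any sequential relaxation is at most the
optimal value of the LP relaxation of the standard MKP formulation. -/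
theorem zseq_le_zLP
    (m n : ℕ) (w p : Fin n → ℝ) (c : Fin m → ℝ)
    (hw : ∀ j, 0 < w j) (hp : ∀ j, 0 ≤ p j)
    (K : Fin n → ℕ) (s : (j : Fin n) → Fin (K j) → ℝ)
    (hs : ∀ j k, 0 < s j k) (hsum : ∀ j, ∑ k, s j k = w j)
    (zseq zLP : ℝ)
    (hseq : IsGreatest {z : ℝ | ∃ a : (j : Fin n) → Fin (K j) → Option (Fin m),
        (∀ i, ∑ j, ∑ k, (if a j k = some i then s j k else 0) ≤ c i) ∧
        z = ∑ i, ∑ j, ∑ k, (if a j k = some i then (p j / w j) * s j k else 0)} zseq)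
    (hLP : IsGreatest {z : ℝ | ∃ x : Fin m → Fin n → ℝ,
        (∀ i j, 0 ≤ x i j ∧ x i j ≤ 1) ∧
        (∀ i, ∑ j, w j * x i j ≤ c i) ∧
        (∀ j, ∑ i, x i j ≤ 1) ∧
        z = ∑ i, ∑ j, p j * x i j} zLP) :
    zseq ≤ zLP :=
  zseq_le_zLP_general m n w p c hw K s hs hsum zseq zLP hseq hLP
end

section
/- If all weights w_j and capacities c_i are positive integers, then the sequential relaxation obtained by splitting every item j into w_j pieces of size 1 and profit p_j/w_j has optimal value equal to the optimal value of the LP relaxation of the standard MKP formulation. -/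
/-!
Split item `j` into `w j` unit pieces of profit `p j / w j`. An assignment of pieces gives an
LP point of the same value by setting `x i j` to the fraction of the pieces of `j` placed in
knapsack `i`. Conversely, an LP point `x` gives every piece of item `j` the fractional amount
`∑ i, x i j`; these amounts lie in `[0, 1]` and add up to at most `C = ∑ i, c i`. On the polytope
`{0 ≤ u ≤ 1, ∑ u ≤ C}` a linear objective with nonnegative coefficients is maximised by the
indicator of the `C` most profitable pieces, and any `C` pieces fit into the knapsacks because
all pieces have unit size.
-/

open Finset

section

variable {ι κ : Type*}

theorem sum_mul_le_sum_mul_of_forall_le {s : Finset ι} {t : Finset κ} {a α : ι → ℝ}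
    {b β : κ → ℝ} (ha : ∀ i ∈ s, 0 ≤ a i) (hb : ∀ k ∈ t, 0 ≤ b k) (hα : ∀ i ∈ s, 0 ≤ α i)
    (hβ : ∀ k ∈ t, 0 ≤ β k) (hab : ∀ i ∈ s, ∀ k ∈ t, a i ≤ b k)
    (hmass : ∑ i ∈ s, α i ≤ ∑ k ∈ t, β k) :
    ∑ i ∈ s, α i * a i ≤ ∑ k ∈ t, β k * b k := by
  obtain ⟨θ, hθ, has, hbt⟩ : ∃ θ, 0 ≤ θ ∧ (∀ i ∈ s, a i ≤ θ) ∧ ∀ k ∈ t, θ ≤ b k := by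
    rcases s.eq_empty_or_nonempty with rfl | hs
    · exact ⟨0, le_rfl, by simp, hb⟩
    · obtain ⟨i₀, hi₀, hmax⟩ := s.exists_max_image a hs
      exact ⟨a i₀, ha i₀ hi₀, hmax, hab i₀ hi₀⟩
  calc ∑ i ∈ s, α i * a i
      ≤ ∑ i ∈ s, α i * θ := sum_le_sum fun i hi => mul_le_mul_of_nonneg_left (has i hi) (hα i hi)
    _ = (∑ i ∈ s, α i) * θ := (sum_mul ..).symm
    _ ≤ (∑ k ∈ t, β k) * θ := mul_le_mul_of_nonneg_right hmass hθ
    _ = ∑ k ∈ t, β k * θ := sum_mul ..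
    _ ≤ ∑ k ∈ t, β k * b k := sum_le_sum fun k hk => mul_le_mul_of_nonneg_left (hbt k hk) (hβ k hk)

theorem le_of_isMaxOn_sum_powersetCard [DecidableEq ι] {ρ : ι → ℝ} {s S : Finset ι} {C : ℕ}
    (hS : S ∈ s.powersetCard C) (hmax : IsMaxOn (fun T => ∑ i ∈ T, ρ i) (s.powersetCard C) S)
    {x y : ι} (hx : x ∈ S) (hy : y ∈ s) (hyS : y ∉ S) : ρ y ≤ ρ x := by
  rw [mem_powersetCard] at hS
  have hswap : insert y (S.erase x) ∈ s.powersetCard C := by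
    rw [mem_powersetCard, card_insert_of_notMem fun h => hyS (mem_of_mem_erase h),
      card_erase_of_mem hx, ← hS.2]
    exact ⟨insert_subset hy ((erase_subset x S).trans hS.1),
      Nat.sub_add_cancel (card_pos.2 ⟨x, hx⟩)⟩
  have := isMaxOn_iff.1 hmax _ hswap
  rw [sum_insert fun h => hyS (mem_of_mem_erase h), ← add_sum_erase S ρ hx] at this
  linarith

theorem exists_card_le_sum_mul_le [Fintype ι] {ρ u : ι → ℝ} (hρ : ∀ i, 0 ≤ ρ i)
    (hu₀ : ∀ i, 0 ≤ u i) (hu₁ : ∀ i, u i ≤ 1) {C : ℕ} (hC : ∑ i, u i ≤ C) :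
    ∃ S : Finset ι, #S ≤ C ∧ ∑ i, u i * ρ i ≤ ∑ i ∈ S, ρ i := by
  classical
  by_cases hcard : Fintype.card ι ≤ C
  · exact ⟨univ, hcard, sum_le_sum fun i _ => mul_le_of_le_one_left (hρ i) (hu₁ i)⟩
  obtain ⟨S, hS, hmax⟩ := (univ.powersetCard C).exists_max_image (fun T => ∑ i ∈ T, ρ i)
    (powersetCard_nonempty.2 (by rw [card_univ]; omega))
  have hSC : #S = C := (mem_powersetCard.1 hS).2
  have hmass : ∑ i ∈ Sᶜ, u i ≤ ∑ i ∈ S, (1 - u i) := by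
    rw [sum_sub_distrib, sum_const, hSC, nsmul_one]
    linarith [sum_compl_add_sum S u]
  have hcompl : ∑ i ∈ Sᶜ, u i * ρ i ≤ ∑ i ∈ S, (1 - u i) * ρ i :=
    sum_mul_le_sum_mul_of_forall_le (fun i _ => hρ i) (fun i _ => hρ i) (fun i _ => hu₀ i)
      (fun i _ => sub_nonneg.2 (hu₁ i))
      (fun y hy x hx =>
        le_of_isMaxOn_sum_powersetCard hS (isMaxOn_iff.2 hmax) hx (mem_univ y) (mem_compl.1 hy))
      hmass
  refine ⟨S, hSC.le, ?_⟩
  calc ∑ i, u i * ρ i = ∑ i ∈ Sᶜ, u i * ρ i + ∑ i ∈ S, u i * ρ i := (sum_compl_add_sum S _).symm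
    _ ≤ ∑ i ∈ S, (1 - u i) * ρ i + ∑ i ∈ S, u i * ρ i := by gcongr
    _ = ∑ i ∈ S, ρ i := by rw [← sum_add_distrib]; congr! 1 with i; ring

theorem exists_assignment_of_card_le [Fintype ι] [Fintype κ] [DecidableEq κ] (S : Finset ι)
    (c : κ → ℕ) (hS : #S ≤ ∑ k, c k) :
    ∃ a : ι → Option κ, (∀ x, (a x).isSome ↔ x ∈ S) ∧ ∀ k, #{x | a x = some k} ≤ c k := by
  classical
  obtain ⟨f⟩ : Nonempty (S ↪ Σ k, Fin (c k)) :=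
    Function.Embedding.nonempty_of_card_le (by simpa using hS)
  let a : ι → Option κ := fun x => if h : x ∈ S then some (f ⟨x, h⟩).1 else none
  have hmem {x : ι} {k : κ} (hx : a x = some k) : ∃ h : x ∈ S, (f ⟨x, h⟩).1 = k := by
    by_cases h : x ∈ S <;> simp_all [a]
  refine ⟨a, fun x => by by_cases h : x ∈ S <;> simp [a, h], fun k => ?_⟩
  let g : {x // a x = some k} → {t : Σ k, Fin (c k) // t.1 = k} := fun x =>
    ⟨f ⟨x, (hmem x.2).1⟩, (hmem x.2).2⟩
  have hg : Function.Injective g := fun x y hxy => by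
    simpa [Subtype.ext_iff] using f.injective (congrArg Subtype.val hxy)
  simpa [Fintype.card_subtype, Fintype.card_congr (Equiv.sigmaSubtype k)] using
    Fintype.card_le_of_injective g hg

theorem sum_sum_ite_eq_some [Fintype ι] [Fintype κ] [DecidableEq κ] (a : ι → Option κ) (g : ι → ℝ) :
    ∑ k, ∑ x, (if a x = some k then g x else 0) = ∑ x with (a x).isSome, g x := by
  rw [sum_comm, sum_filter]
  congr! 1 with x
  cases a x <;> simp

end

/-- `a j k` is the knapsack receiving the `k`-th unit piece of item `j`, `none` if it is unused. -/
def unitSeqValues {m n : ℕ} (w : Fin n → ℕ) (p : Fin n → ℝ) (c : Fin m → ℕ) : Set ℝ :=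
  {z : ℝ | ∃ a : (j : Fin n) → Fin (w j) → Option (Fin m),
    (∀ i, ∑ j, ∑ k : Fin (w j), (if a j k = some i then (1 : ℝ) else 0) ≤ (c i : ℝ)) ∧
    z = ∑ i, ∑ j, ∑ k : Fin (w j), (if a j k = some i then p j / (w j : ℝ) else 0)}

def lpValues {m n : ℕ} (w : Fin n → ℕ) (p : Fin n → ℝ) (c : Fin m → ℕ) : Set ℝ :=
  {z : ℝ | ∃ x : Fin m → Fin n → ℝ,
    (∀ i j, 0 ≤ x i j) ∧
    (∀ i, ∑ j, (w j : ℝ) * x i j ≤ (c i : ℝ)) ∧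
    (∀ j, ∑ i, x i j ≤ 1) ∧
    z = ∑ i, ∑ j, p j * x i j}

section Knapsack

variable {m n : ℕ} {w : Fin n → ℕ} (p : Fin n → ℝ) (c : Fin m → ℕ)

theorem unitSeqValues_subset_lpValues (hw : ∀ j, 1 ≤ w j) :
    unitSeqValues w p c ⊆ lpValues w p c := by
  rintro _ ⟨a, hcap, rfl⟩
  have hwpos (j : Fin n) : (0 : ℝ) < w j := by exact_mod_cast hw j
  let load (i : Fin m) (j : Fin n) : ℝ := ∑ k : Fin (w j), if a j k = some i then 1 else 0
  refine ⟨fun i j => load i j / w j, fun i j => div_nonneg (sum_nonneg fun k _ => ?_) (hwpos j).le,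
    fun i => ?_, fun j => ?_, ?_⟩
  · split_ifs <;> norm_num
  · exact (sum_congr rfl fun j _ => mul_div_cancel₀ _ (hwpos j).ne').trans_le (hcap i)
  · rw [← sum_div, div_le_one (hwpos j)]
    calc ∑ i, load i j = ∑ k with (a j k).isSome, (1 : ℝ) := sum_sum_ite_eq_some (a j) fun _ => 1
      _ ≤ w j := by simpa using card_filter_le univ fun k => (a j k).isSome
  · refine sum_congr rfl fun i _ => sum_congr rfl fun j _ => ?_
    rw [mul_div_left_comm, sum_mul]
    simp only [boole_mul]

theorem exists_unitSeqValues_ge (hw : ∀ j, 1 ≤ w j) (hp : ∀ j, 0 ≤ p j) {z : ℝ}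
    (hz : z ∈ lpValues w p c) : ∃ z' ∈ unitSeqValues w p c, z ≤ z' := by
  obtain ⟨x, hx₀, hxc, hx₁, rfl⟩ := hz
  have hsum (f : Fin n → ℝ) : ∑ q : Σ j, Fin (w j), f q.1 = ∑ j, (w j : ℝ) * f j := by
    simp [Fintype.sum_sigma]
  let u (q : Σ j, Fin (w j)) : ℝ := ∑ i, x i q.1
  let ρ (q : Σ j, Fin (w j)) : ℝ := p q.1 / w q.1
  have hu : ∑ q, u q ≤ (∑ i, c i : ℕ) := by
    calc ∑ q, u q = ∑ j, (w j : ℝ) * ∑ i, x i j := hsum fun j => ∑ i, x i j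
      _ = ∑ i, ∑ j, (w j : ℝ) * x i j := by simp only [mul_sum]; exact sum_comm
      _ ≤ (∑ i, c i : ℕ) := by push_cast; exact sum_le_sum fun i _ => hxc i
  obtain ⟨S, hSc, hSval⟩ := exists_card_le_sum_mul_le (ρ := ρ)
    (fun q => div_nonneg (hp q.1) (Nat.cast_nonneg _)) (fun q => sum_nonneg fun i _ => hx₀ i q.1)
    (fun q => hx₁ q.1) hu
  obtain ⟨a, haS, hload⟩ := exists_assignment_of_card_le S c hSc
  refine ⟨_, ⟨fun j k => a ⟨j, k⟩, fun i => ?_, rfl⟩, ?_⟩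
  · rw [← Fintype.sum_sigma fun q => if a q = some i then (1 : ℝ) else 0, sum_boole]
    exact_mod_cast hload i
  · have hval : ∑ q, u q * ρ q = ∑ i, ∑ j, p j * x i j := by
      have hwne (j : Fin n) : (w j : ℝ) ≠ 0 := by have := hw j; positivity
      calc ∑ q, u q * ρ q = ∑ j, (w j : ℝ) * ((∑ i, x i j) * (p j / w j)) :=
          hsum fun j => (∑ i, x i j) * (p j / w j)
        _ = ∑ j, p j * ∑ i, x i j := sum_congr rfl fun j _ => by field_simp [hwne j]
        _ = ∑ i, ∑ j, p j * x i j := by simp only [mul_sum]; exact sum_comm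
    have hS : ∑ q ∈ S, ρ q = ∑ i, ∑ q, if a q = some i then ρ q else 0 := by
      rw [sum_sum_ite_eq_some]
      exact sum_congr (by ext; simp [haS]) fun _ _ => rfl
    simpa only [← hval, hS, Fintype.sum_sigma] using hSval

end Knapsack

/-- with integer weights and capacities, the sequential relaxation
obtained by splitting every item `j` into `w j` unit-size pieces of profit
`p j / w j` has optimal value equal to the LP relaxation optimum. -/
theorem unit_sequential_eq_LP
    (m n : ℕ) (w : Fin n → ℕ) (hw : ∀ j, 1 ≤ w j)
    (p : Fin n → ℝ) (hp : ∀ j, 0 ≤ p j) (c : Fin m → ℕ)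
    (zseq zLP : ℝ)
    (hseq : IsGreatest {z : ℝ | ∃ a : (j : Fin n) → Fin (w j) → Option (Fin m),
        (∀ i, ∑ j, ∑ k : Fin (w j), (if a j k = some i then (1 : ℝ) else 0) ≤ (c i : ℝ)) ∧
        z = ∑ i, ∑ j, ∑ k : Fin (w j),
              (if a j k = some i then p j / (w j : ℝ) else 0)} zseq)
    (hLP : IsGreatest {z : ℝ | ∃ x : Fin m → Fin n → ℝ,
        (∀ i j, 0 ≤ x i j) ∧
        (∀ i, ∑ j, (w j : ℝ) * x i j ≤ (c i : ℝ)) ∧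
        (∀ j, ∑ i, x i j ≤ 1) ∧
        z = ∑ i, ∑ j, p j * x i j} zLP) :
    zseq = zLP := by
  change IsGreatest (unitSeqValues w p c) zseq at hseq
  change IsGreatest (lpValues w p c) zLP at hLP
  obtain ⟨z, hz, hLPz⟩ := exists_unitSeqValues_ge p c hw hp hLP.1
  exact le_antisymm (hLP.2 (unitSeqValues_subset_lpValues p c hw hseq.1)) (hLPz.trans (hseq.2 hz))
end
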